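/- Let K ≥ 2, k ≥ 1, and let a,b,c ∈ Σ_K with liminf_{i→∞} ρ(σ_K^i(a),σ_K^i(b)) ≥ K^{−k+1}. Let [p,q] be a compact subinterval of [0,1] and let N ∈ 𝓜([p,q]). Set x = Φ_{N,c}(a) and y = Φ_{N,c}(b). Then for every ε with 0 < ε ≤ K^{−k+1}, the density spectrum μ({i ≥ 0 : ρ(σ_K^i(x),σ_K^i(y)) < ε}) equals [p,q]; in particular (x,y) ∈ D_{σ_K}([p,q]). -/

import Mathlib

open Filter Set MeasureTheory Topology TopologicalSpace

noncomputable section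

/-- The symbolic space `Σ_K` on `K` symbols: sequences `ℕ → Fin K`. -/
def SymbSp (K : ℕ) : Type := ℕ → Fin K

namespace SymbSp

variable {K : ℕ}

theorem exists_ne {x y : SymbSp K} (h : ¬x = y) : ∃ i, x i ≠ y i := by
  by_contra hc
  push_neg at hc
  exact h (funext hc)

open Classical in
/-- The metric `ρ(x,y) = K^{-δ(x,y)}` on `Σ_K`. -/
def sdist (x y : SymbSp K) : ℝ :=
  if h : x = y then 0 else ((K : ℝ))⁻¹ ^ Nat.find (exists_ne h)

theorem sdist_self (x : SymbSp K) : sdist x x = 0 := by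
  unfold sdist
  exact dif_pos rfl

open Classical in
theorem sdist_eq {x y : SymbSp K} (h : ¬x = y) :
    sdist x y = ((K : ℝ))⁻¹ ^ Nat.find (exists_ne h) := by
  unfold sdist
  exact dif_neg h

theorem sdist_nonneg' (x y : SymbSp K) : 0 ≤ sdist x y := by
  unfold sdist
  split
  · exact le_rfl
  · positivity

theorem inv_cast_le_one (K : ℕ) : ((K : ℝ))⁻¹ ≤ 1 := by
  rcases Nat.eq_zero_or_pos K with h | h
  · simp [h]
  · exact inv_le_one_of_one_le₀ (by exact_mod_cast h)

open Classical in
theorem eq_of_lt_find {x y : SymbSp K} (h : ¬x = y) {i : ℕ}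
    (hi : i < Nat.find (exists_ne h)) : x i = y i :=
  not_not.mp (Nat.find_min (exists_ne h) hi)

open Classical in
theorem sdist_le_of_agree {x y : SymbSp K} {n : ℕ} (h : ∀ i < n, x i = y i) :
    sdist x y ≤ ((K : ℝ))⁻¹ ^ n := by
  by_cases hxy : x = y
  · rw [hxy, sdist_self]; positivity
  · rw [sdist_eq hxy]
    apply pow_le_pow_of_le_one (by positivity) (inv_cast_le_one K)
    rw [Nat.le_find_iff]
    intro m hm
    simp only [ne_eq, not_not]
    exact h m hm

open Classical in
theorem sdist_comm (x y :  SymbSp K) : sdist x y = sdist y x := by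
  by_cases h : x = y
  · rw [h]
  · rw [sdist_eq h, sdist_eq (fun hyx => h hyx.symm)]
    all_goals congr 1
    all_goals (exact le_antisymm (Nat.find_mono fun n hn => hn.symm) (Nat.find_mono fun n hn => hn.symm))

open Classical in
theorem sdist_le_max (x y z : SymbSp K) : sdist x z ≤ max (sdist x y) (sdist y z) := by
  by_cases hxz : x = z
  · rw [hxz, sdist_self]
    exact le_max_of_le_left (sdist_nonneg' _ _)
  by_cases hxy : x = y
  · rw [hxy]; exact le_max_right _ _
  by_cases hyz : y = z
  · rw [← hyz]; exact le_max_left _ _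
  rcases le_total (Nat.find (exists_ne hxy)) (Nat.find (exists_ne hyz)) with hle | hle
  · refine le_max_of_le_left ?_
    rw [sdist_eq hxy]
    exact sdist_le_of_agree fun i hi =>
      (eq_of_lt_find hxy hi).trans (eq_of_lt_find hyz (lt_of_lt_of_le hi hle))
  · refine le_max_of_le_right ?_
    rw [sdist_eq hyz]
    exact sdist_le_of_agree fun i hi =>
      (eq_of_lt_find hxy (lt_of_lt_of_le hi hle)).trans (eq_of_lt_find hyz hi)

theorem eq_of_sdist_eq_zero {x y : SymbSp K} (h : sdist x y = 0) : x = y := by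
  by_contra hxy
  rw [sdist_eq hxy] at h
  have hK : (0 : ℝ) < (K : ℝ) := by exact_mod_cast Fin.pos (x 0)
  exact absurd h (ne_of_gt (pow_pos (inv_pos.mpr hK) _))

instance : MetricSpace (SymbSp K) where
  dist := sdist
  dist_self := sdist_self
  dist_comm := sdist_comm
  dist_triangle x y z :=
    (sdist_le_max x y z).trans (max_le_add_of_nonneg (sdist_nonneg' _ _) (sdist_nonneg' _ _))
  eq_of_dist_eq_zero := fun h => eq_of_sdist_eq_zero h

instance : MeasurableSpace (SymbSp K) := borel _

instance : BorelSpace (SymbSp K) := ⟨rfl⟩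

instance : SeparableSpace (SymbSp K) := by
  obtain hK | hK | hK : K = 0 ∨ K = 1 ∨ 2 ≤ K := by omega
  · subst hK
    haveI : IsEmpty (SymbSp 0) := ⟨fun x => (x 0).elim0⟩
    exact ⟨⟨Set.univ, Set.countable_univ, dense_univ⟩⟩
  · subst hK
    haveI : Subsingleton (SymbSp 1) := ⟨fun x y => funext fun i => Subsingleton.elim _ _⟩
    exact ⟨⟨Set.univ, Set.countable_univ, dense_univ⟩⟩
  · refine ⟨⟨Set.range (fun w : (Σ n : ℕ, (Fin n → Fin K)) =>
      (fun i => if h : i < w.1 then w.2 ⟨i, h⟩ else ⟨0, by omega⟩ : SymbSp K)),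
      Set.countable_range _, ?_⟩⟩
    rw [Metric.dense_iff]
    intro x r hr
    obtain ⟨n, hn⟩ : ∃ n : ℕ, ((K : ℝ))⁻¹ ^ n < r :=
      exists_pow_lt_of_lt_one hr (inv_lt_one_of_one_lt₀ (by exact_mod_cast hK))
    refine ⟨(fun i => if h : i < n then x i else ⟨0, by omega⟩ : SymbSp K),
      ?_, ⟨⟨n, fun j => x j⟩, rfl⟩⟩
    refine Metric.mem_ball.mpr ?_
    exact lt_of_le_of_lt (sdist_le_of_agree fun i hi => dif_pos hi) hn

instance : SecondCountableTopology (SymbSp K) :=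
  UniformSpace.secondCountable_of_separable _

end SymbSp

/-- The shift map `σ_K` on `Σ_K`. -/
def shift (K : ℕ) : SymbSp K → SymbSp K := fun x i => x (i + 1)

end
noncomputable section DistChaos

variable {X : Type*} [MetricSpace X]

/-- The lower distributional function `F_{x,y}(ε)`. -/
def lowF (f : X → X) (x y : X) (ε : ℝ) : ℝ :=
  Filter.liminf (fun n : ℕ =>
    (((Finset.range n).filter fun i => dist (f^[i] x) (f^[i] y) < ε).card : ℝ) / n)
    Filter.atTop

/-- The upper distributional function `F*_{x,y}(ε)`. -/
def uppF (f : X → X) (x y : X) (ε : ℝ) : ℝ :=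
  Filter.limsup (fun n : ℕ =>
    (((Finset.range n).filter fun i => dist (f^[i] x) (f^[i] y) < ε).card : ℝ) / n)
    Filter.atTop

/-- The set `E_f([p,q])`. -/
def Eset (f : X → X) (p q : ℝ) : Set (X × X) :=
  {z | Filter.Tendsto (fun ε => lowF f z.1 z.2 ε) (nhdsWithin 0 (Set.Ioi 0)) (nhds p) ∧
       Filter.Tendsto (fun ε => uppF f z.1 z.2 ε) (nhdsWithin 0 (Set.Ioi 0)) (nhds q)}

/-- The set `D_f([p,q])`. -/
def Dset (f : X → X) (p q : ℝ) : Set (X × X) :=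
  {z | ∃ ε₀ > 0, ∀ ε : ℝ, 0 < ε → ε ≤ ε₀ →
        lowF f z.1 z.2 ε = p ∧ uppF f z.1 z.2 ε = q}

end DistChaos

noncomputable section

/-- `γ_N(n) = ζ_n(N) = #(N ∩ [0,n))`; on `N` this is the unique order preserving
bijection `N → ℕ`. -/
def gammaCount (N : Set ℕ) (n : ℕ) : ℕ := (N ∩ Set.Iio n).ncard

open Classical in
/-- The map `Φ_{N,a} : Σ_K → Σ_K`:
`(Φ_{N,a}(x))_i = a_{γ_N(i)}` for `i ∈ N` and `x_{γ_{Nᶜ}(i)}` for `i ∈ Nᶜ`. -/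
def Phi {K : ℕ} (N : Set ℕ) (a : SymbSp K) (x : SymbSp K) : SymbSp K :=
  fun i => if i ∈ N then a (gammaCount N i) else x (gammaCount Nᶜ i)

/-!
On `N` the points `x = Φ_{N,c}(a)` and `y = Φ_{N,c}(b)` coincide, while along `k` consecutive
positions of `Nᶜ` they read `k` consecutive letters of `a` and of `b`, which eventually differ
somewhere by distality. Since `dist < ε` means agreement on a window of some length `m ≥ k`, the
set `S` of times at which `σⁱ x` and `σⁱ y` are `ε`-close differs from `N` only at finitely many
points and at points lying at most `m` steps before an endpoint `t j`. The gaps of `t` tend to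
infinity, so these endpoints have density zero, and `S` has the density spectrum of `N`.

The partial densities of `N` increase along its blocks and decrease along its gaps, so their
limsup and liminf are the limits `q` and `p` along the endpoints; consecutive partial densities
differ by at most `1 / (n + 1)`, so every value in between is a limit point too.
-/

theorem mapClusterPt_of_frequently_lt_of_frequently_gt {f : ℕ → ℝ} {r : ℝ}
    (hstep : Tendsto (fun n => f (n + 1) - f n) atTop (𝓝 0))
    (hlt : ∃ᶠ n in atTop, f n < r) (hgt : ∃ᶠ n in atTop, r < f n) :
    MapClusterPt r atTop f := by
  rw [mapClusterPt_iff_frequently]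
  intro s hs
  obtain ⟨δ, hδ, hball⟩ := Metric.mem_nhds_iff.mp hs
  obtain ⟨M, hM⟩ := eventually_atTop.mp (Metric.tendsto_nhds.mp hstep δ hδ)
  refine frequently_atTop.mpr fun A => ?_
  obtain ⟨n₁, hn₁, hf₁⟩ := frequently_atTop.mp hlt (max A M)
  obtain ⟨n₂, hn₂, hf₂⟩ := frequently_atTop.mp hgt n₁
  -- the first index after `n₁` at which `f` reaches `r`
  obtain ⟨j, hj, hj₁⟩ := Nat.exists_not_and_succ_of_not_zero_of_exists
    (p := fun j => r ≤ f (n₁ + j)) (by simpa using hf₁)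
    ⟨n₂ - n₁, by simpa [Nat.add_sub_cancel' hn₂] using hf₂.le⟩
  have hjump := hM (n₁ + j) (by omega)
  refine ⟨n₁ + j + 1, by omega, hball ?_⟩
  simp only [not_le, ← add_assoc] at hj hj₁
  rw [Real.dist_eq, sub_zero, abs_lt] at hjump
  rw [Metric.mem_ball, Real.dist_eq, abs_lt]
  constructor <;> linarith [hjump.1, hjump.2]

theorem setOf_mapClusterPt_eq_Icc {f : ℕ → ℝ}
    (hle : IsBoundedUnder (· ≤ ·) atTop f) (hge : IsBoundedUnder (· ≥ ·) atTop f)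
    (hstep : Tendsto (fun n => f (n + 1) - f n) atTop (𝓝 0)) :
    {r | MapClusterPt r atTop f} = Icc (liminf f atTop) (limsup f atTop) := by
  ext r
  refine ⟨fun hr => ⟨hr.liminf_le hge, hr.le_limsup hle⟩, fun ⟨hlr, hrl⟩ => ?_⟩
  rcases hlr.eq_or_lt with rfl | hlr
  · exact MapClusterPt.liminf hle.isCoboundedUnder_ge hge
  rcases hrl.eq_or_lt with rfl | hrl
  · exact MapClusterPt.limsup hge.isCoboundedUnder_le hle
  exact mapClusterPt_of_frequently_lt_of_frequently_gt hstep
    (frequently_lt_of_liminf_lt hle.isCoboundedUnder_ge hlr)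
    (frequently_lt_of_lt_limsup hge.isCoboundedUnder_le hrl)

theorem MapClusterPt.of_tendsto_dist {α X : Type*} [PseudoMetricSpace X] {l : Filter α}
    {f g : α → X} {x : X} (hf : MapClusterPt x l f)
    (hfg : Tendsto (fun a => dist (f a) (g a)) l (𝓝 0)) : MapClusterPt x l g := by
  rw [mapClusterPt_iff_frequently] at hf ⊢
  intro s hs
  obtain ⟨δ, hδ, hball⟩ := Metric.mem_nhds_iff.mp hs
  have hclose := (Metric.tendsto_nhds.mp hfg (δ / 2) (half_pos hδ))
  refine ((hf _ (Metric.ball_mem_nhds x (half_pos hδ))).and_eventually hclose).mono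
    fun a ⟨hfa, hga⟩ => hball ?_
  rw [Metric.mem_ball] at hfa ⊢
  rw [Real.dist_eq, sub_zero, abs_of_nonneg dist_nonneg] at hga
  linarith [dist_triangle (g a) (f a) x, dist_comm (g a) (f a)]

theorem limsup_eq_of_mapClusterPt {β α : Type*} [ConditionallyCompleteLinearOrder α]
    [TopologicalSpace α] [OrderTopology α] [DenselyOrdered α] [NoMaxOrder α] {l : Filter β}
    {f : β → α} {q : α} (hq : MapClusterPt q l f) (hle : ∀ r > q, ∀ᶠ n in l, f n ≤ r) :
    limsup f l = q := by
  have hco : IsCoboundedUnder (· ≤ ·) l f :=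
    ⟨q, fun r hr => isClosed_Iic.mem_of_mapClusterPt hq hr⟩
  obtain ⟨r, hr⟩ := exists_gt q
  exact le_antisymm (le_of_forall_gt_imp_ge_of_dense fun r hr => limsup_le_of_le hco (hle r hr))
    (hq.le_limsup (isBoundedUnder_of_eventually_le (hle r hr)))

theorem liminf_eq_of_mapClusterPt {β α : Type*} [ConditionallyCompleteLinearOrder α]
    [TopologicalSpace α] [OrderTopology α] [DenselyOrdered α] [NoMinOrder α] {l : Filter β}
    {f : β → α} {p : α} (hp : MapClusterPt p l f) (hge : ∀ r < p, ∀ᶠ n in l, r ≤ f n) :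
    liminf f l = p :=
  limsup_eq_of_mapClusterPt (α := αᵒᵈ) hp hge

theorem card_filter_range_eq_ncard (P : ℕ → Prop) [DecidablePred P] (n : ℕ) :
    ((Finset.range n).filter P).card = ({i | P i} ∩ Iio n).ncard := by
  rw [← Set.ncard_coe_finset]
  congr 1
  ext i
  simp [and_comm]

theorem ncard_inter_Iio_eq_count (A : Set ℕ) [DecidablePred (· ∈ A)] (n : ℕ) :
    (A ∩ Iio n).ncard = Nat.count (· ∈ A) n := by
  rw [Nat.count_eq_card_filter_range, card_filter_range_eq_ncard]
  rfl

theorem ncard_inter_Iio_le (A : Set ℕ) (n : ℕ) : (A ∩ Iio n).ncard ≤ n :=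
  (Set.ncard_le_ncard inter_subset_right (finite_Iio n)).trans (Set.ncard_Iio_nat n).le

theorem ncard_inter_Iio_add_of_Ico_subset {A : Set ℕ} {u l : ℕ} (h : Ico u (u + l) ⊆ A) :
    (A ∩ Iio (u + l)).ncard = (A ∩ Iio u).ncard + l := by
  classical
  simp only [ncard_inter_Iio_eq_count, Nat.count_add]
  rw [Nat.count_of_forall fun j hj => h ⟨le_self_add, by omega⟩]

theorem ncard_inter_Iio_add_of_Ico_subset_compl {A : Set ℕ} {u l : ℕ} (h : Ico u (u + l) ⊆ Aᶜ) :
    (A ∩ Iio (u + l)).ncard = (A ∩ Iio u).ncard := by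
  classical
  simp only [ncard_inter_Iio_eq_count, Nat.count_add]
  rw [Nat.count_iff_forall_not.mpr fun j hj => h ⟨le_self_add, by omega⟩, add_zero]

theorem tendsto_gammaCount_atTop {A : Set ℕ} (hA : A.Infinite) :
    Tendsto (gammaCount A) atTop atTop := by
  classical
  refine tendsto_atTop_atTop.mpr fun b => ⟨Nat.nth (· ∈ A) b, fun n hn => ?_⟩
  rw [gammaCount, ncard_inter_Iio_eq_count, ← Nat.count_nth_of_infinite (p := (· ∈ A)) hA b]
  exact Nat.count_monotone _ hn

/-- `ζ_n(A) / n` in the paper's notation. -/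
def partialDensity (A : Set ℕ) (n : ℕ) : ℝ := ((A ∩ Iio n).ncard : ℝ) / n

section PartialDensity

variable {A B : Set ℕ}

theorem partialDensity_nonneg (A : Set ℕ) (n : ℕ) : 0 ≤ partialDensity A n := by
  unfold partialDensity
  positivity

theorem partialDensity_le_one (A : Set ℕ) (n : ℕ) : partialDensity A n ≤ 1 :=
  div_le_one_of_le₀ (by exact_mod_cast ncard_inter_Iio_le A n) n.cast_nonneg

theorem abs_partialDensity_succ_sub_le (A : Set ℕ) (n : ℕ) :
    |partialDensity A (n + 1) - partialDensity A n| ≤ 1 / (n + 1) := by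
  classical
  simp only [partialDensity, ncard_inter_Iio_eq_count A, Nat.count_succ]
  rcases n.eq_zero_or_pos with rfl | hn
  · split_ifs <;> norm_num
  have hn : (0 : ℝ) < n := by exact_mod_cast hn
  have hc : (Nat.count (· ∈ A) n : ℝ) ≤ n := by exact_mod_cast Nat.count_le _
  set c : ℝ := (Nat.count (· ∈ A) n : ℝ)
  have hstep : ∀ e : ℝ, 0 ≤ e → e ≤ 1 → |(c + e) / (n + 1) - c / n| ≤ 1 / (n + 1) := by
    intro e he₀ he₁
    have hc₀ : 0 ≤ c := Nat.cast_nonneg _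
    have hΔ : (c + e) / (n + 1) - c / n = (e * n - c) / n / (n + 1) := by
      field_simp
      ring
    rw [hΔ, abs_div, abs_div, abs_of_pos hn, abs_of_pos (by positivity : (0 : ℝ) < n + 1)]
    refine div_le_div_of_nonneg_right ?_ (by positivity)
    rw [div_le_one hn, abs_le]
    constructor <;> nlinarith
  push_cast
  split_ifs
  · exact hstep 1 zero_le_one le_rfl
  · simpa using hstep 0 le_rfl zero_le_one

theorem tendsto_partialDensity_succ_sub (A : Set ℕ) :
    Tendsto (fun n => partialDensity A (n + 1) - partialDensity A n) atTop (𝓝 0) :=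
  squeeze_zero_norm (abs_partialDensity_succ_sub_le A) tendsto_one_div_add_atTop_nhds_zero_nat

theorem partialDensity_le_of_Ico_subset {u v : ℕ} (huv : u ≤ v) (h : Ico u v ⊆ A) :
    partialDensity A u ≤ partialDensity A v := by
  obtain ⟨d, rfl⟩ := Nat.exists_eq_add_of_le huv
  have hc : ((A ∩ Iio u).ncard : ℝ) ≤ u := by exact_mod_cast ncard_inter_Iio_le A u
  rw [partialDensity, partialDensity, ncard_inter_Iio_add_of_Ico_subset h]
  rcases u.eq_zero_or_pos with rfl | hu
  · simp only [Nat.cast_zero, div_zero]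
    positivity
  rw [div_le_div_iff₀ (by exact_mod_cast hu) (by positivity)]
  push_cast
  nlinarith

theorem partialDensity_le_of_Ico_subset_compl {u v : ℕ} (huv : u ≤ v) (h : Ico u v ⊆ Aᶜ) :
    partialDensity A v ≤ partialDensity A u := by
  obtain ⟨d, rfl⟩ := Nat.exists_eq_add_of_le huv
  rw [partialDensity, partialDensity, ncard_inter_Iio_add_of_Ico_subset_compl h]
  rcases u.eq_zero_or_pos with rfl | hu
  · simp
  exact div_le_div_of_nonneg_left (by positivity) (by exact_mod_cast hu) (by simp)

theorem partialDensity_compl (A : Set ℕ) {n : ℕ} (hn : 0 < n) :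
    partialDensity Aᶜ n = 1 - partialDensity A n := by
  have hsplit := Set.ncard_inter_add_ncard_sdiff_eq_ncard (Iio n) A (finite_Iio n)
  rw [Set.ncard_Iio_nat, Set.sdiff_eq, inter_comm, inter_comm (Iio n)] at hsplit
  rw [partialDensity, partialDensity, eq_sub_iff_add_eq, ← add_div,
    div_eq_one_iff_eq (by positivity)]
  exact_mod_cast (add_comm _ _).trans hsplit

theorem partialDensity_mono (h : A ⊆ B) (n : ℕ) : partialDensity A n ≤ partialDensity B n := by
  have hcard := Set.ncard_le_ncard (inter_subset_inter_left (Iio n) h)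
    ((finite_Iio n).inter_of_right B)
  exact div_le_div_of_nonneg_right (by exact_mod_cast hcard) n.cast_nonneg

theorem partialDensity_union_le (A B : Set ℕ) (n : ℕ) :
    partialDensity (A ∪ B) n ≤ partialDensity A n + partialDensity B n := by
  rw [partialDensity, partialDensity, partialDensity, ← add_div, union_inter_distrib_right]
  exact div_le_div_of_nonneg_right (by exact_mod_cast Set.ncard_union_le _ _) n.cast_nonneg

theorem partialDensity_Iio_le (T n : ℕ) : partialDensity (Iio T) n ≤ T / n := by
  have h : (Iio T ∩ Iio n).ncard ≤ T :=
    (Set.ncard_le_ncard inter_subset_left (finite_Iio T)).trans_eq (Set.ncard_Iio_nat T)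
  exact div_le_div_of_nonneg_right (by exact_mod_cast h) n.cast_nonneg

theorem ncard_inter_Iio_le_add_symmDiff (A B : Set ℕ) (n : ℕ) :
    (A ∩ Iio n).ncard ≤ (B ∩ Iio n).ncard + (symmDiff A B ∩ Iio n).ncard := by
  refine (Set.ncard_le_ncard_sdiff_add_ncard _ (B ∩ Iio n)
    ((finite_Iio n).inter_of_right B)).trans ?_
  rw [add_comm]
  gcongr
  · exact (finite_Iio n).inter_of_right _
  · rintro i ⟨⟨hA, hi⟩, hB⟩
    exact ⟨Or.inl ⟨hA, fun h => hB ⟨h, hi⟩⟩, hi⟩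

theorem abs_partialDensity_sub_le (A B : Set ℕ) (n : ℕ) :
    |partialDensity A n - partialDensity B n| ≤ partialDensity (symmDiff A B) n := by
  have hAB := ncard_inter_Iio_le_add_symmDiff A B n
  have hBA := ncard_inter_Iio_le_add_symmDiff B A n
  rw [symmDiff_comm] at hBA
  rw [partialDensity, partialDensity, partialDensity, ← sub_div, abs_div, Nat.abs_cast]
  refine div_le_div_of_nonneg_right (abs_sub_le_iff.mpr ⟨?_, ?_⟩) n.cast_nonneg
  · linarith [(by exact_mod_cast hAB :
      ((A ∩ Iio n).ncard : ℝ) ≤ (B ∩ Iio n).ncard + (symmDiff A B ∩ Iio n).ncard)]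
  · linarith [(by exact_mod_cast hBA :
      ((B ∩ Iio n).ncard : ℝ) ≤ (A ∩ Iio n).ncard + (symmDiff A B ∩ Iio n).ncard)]

end PartialDensity

theorem tendsto_partialDensity_sub_of_symmDiff_subset {A B E : Set ℕ} {T : ℕ}
    (hE : Tendsto (partialDensity E) atTop (𝓝 0)) (hAB : symmDiff A B ⊆ E ∪ Iio T) :
    Tendsto (fun n => partialDensity A n - partialDensity B n) atTop (𝓝 0) := by
  refine squeeze_zero_norm (fun n => ?_)
    (by simpa using hE.add (tendsto_const_div_atTop_nhds_zero_nat (T : ℝ)))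
  calc ‖partialDensity A n - partialDensity B n‖ ≤ partialDensity (symmDiff A B) n :=
        abs_partialDensity_sub_le A B n
    _ ≤ partialDensity (E ∪ Iio T) n := partialDensity_mono hAB n
    _ ≤ partialDensity E n + T / n :=
        (partialDensity_union_le E _ n).trans (add_le_add_right (partialDensity_Iio_le T n) _)

/-- `μ(A)` in the paper's notation. -/
def densitySpectrum (A : Set ℕ) : Set ℝ := {r | MapClusterPt r atTop (partialDensity A)}

section DensitySpectrum

variable {A B : Set ℕ}

theorem isBoundedUnder_le_partialDensity (A : Set ℕ) :
    IsBoundedUnder (· ≤ ·) atTop (partialDensity A) :=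
  isBoundedUnder_of ⟨1, partialDensity_le_one A⟩

theorem isBoundedUnder_ge_partialDensity (A : Set ℕ) :
    IsBoundedUnder (· ≥ ·) atTop (partialDensity A) :=
  isBoundedUnder_of ⟨0, partialDensity_nonneg A⟩

theorem densitySpectrum_eq_Icc (A : Set ℕ) :
    densitySpectrum A =
      Icc (liminf (partialDensity A) atTop) (limsup (partialDensity A) atTop) :=
  setOf_mapClusterPt_eq_Icc (isBoundedUnder_le_partialDensity A)
    (isBoundedUnder_ge_partialDensity A) (tendsto_partialDensity_succ_sub A)

theorem isLeast_densitySpectrum_liminf (A : Set ℕ) :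
    IsLeast (densitySpectrum A) (liminf (partialDensity A) atTop) :=
  isLeast_mapClusterPt_liminf (isBoundedUnder_le_partialDensity A).isCoboundedUnder_ge
    (isBoundedUnder_ge_partialDensity A)

theorem isGreatest_densitySpectrum_limsup (A : Set ℕ) :
    IsGreatest (densitySpectrum A) (limsup (partialDensity A) atTop) :=
  isGreatest_mapClusterPt_limsup (isBoundedUnder_ge_partialDensity A).isCoboundedUnder_le
    (isBoundedUnder_le_partialDensity A)

theorem densitySpectrum_eq_of_tendsto_sub
    (h : Tendsto (fun n => partialDensity A n - partialDensity B n) atTop (𝓝 0)) :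
    densitySpectrum A = densitySpectrum B := by
  have hdist : Tendsto (fun n => dist (partialDensity A n) (partialDensity B n)) atTop (𝓝 0) := by
    simpa [Real.dist_eq] using h.abs
  ext r
  exact ⟨fun hr => hr.of_tendsto_dist hdist,
    fun hr => hr.of_tendsto_dist (by simpa only [dist_comm] using hdist)⟩

theorem liminf_partialDensity_eq_of_densitySpectrum_eq (h : densitySpectrum A = densitySpectrum B) :
    liminf (partialDensity A) atTop = liminf (partialDensity B) atTop :=
  (isLeast_densitySpectrum_liminf A).unique (h ▸ isLeast_densitySpectrum_liminf B)

theorem limsup_partialDensity_eq_of_densitySpectrum_eq (h : densitySpectrum A = densitySpectrum B) :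
    limsup (partialDensity A) atTop = limsup (partialDensity B) atTop :=
  (isGreatest_densitySpectrum_limsup A).unique (h ▸ isGreatest_densitySpectrum_limsup B)

end DensitySpectrum

def leftThickening (R : Set ℕ) (L : ℕ) : Set ℕ := {i | ∃ s ∈ R, i < s ∧ s ≤ i + L}

theorem leftThickening_mono (R : Set ℕ) {l L : ℕ} (h : l ≤ L) :
    leftThickening R l ⊆ leftThickening R L :=
  fun _ ⟨s, hs, his, hsi⟩ => ⟨s, hs, his, hsi.trans (by omega)⟩

theorem mem_leftThickening_of_mem_iff_ne {N R : Set ℕ}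
    (hR : ∀ n, (n ∈ N ↔ n + 1 ∈ N) ∨ n + 1 ∈ R) {i l : ℕ} (h : ¬(i ∈ N ↔ i + l ∈ N)) :
    i ∈ leftThickening R l := by
  induction l with
  | zero => exact absurd Iff.rfl h
  | succ l ih =>
    by_cases hl : i ∈ N ↔ i + l ∈ N
    · refine ⟨i + l + 1, (hR (i + l)).resolve_left fun h' => h (hl.trans h'), by omega, le_rfl⟩
    · exact leftThickening_mono R l.le_succ (ih hl)

theorem ncard_leftThickening_inter_Iio_le (R : Set ℕ) (L n : ℕ) :
    (leftThickening R L ∩ Iio n).ncard ≤ L * ((R ∩ Iio n).ncard + 1) := by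
  classical
  -- a point `i < n` with `i < s ≤ i + L` lies in `Ico (s' - L) s'` for `s' = min s n`
  set F : Finset ℕ := insert n ((Finset.range n).filter (· ∈ R))
  have hcover : leftThickening R L ∩ Iio n ⊆ ↑(F.biUnion fun s => Finset.Ico (s - L) s) := by
    rintro i ⟨⟨s, hs, his, hsi⟩, hin⟩
    simp only [F, Finset.coe_biUnion, Finset.coe_insert, Finset.coe_filter, Finset.mem_range,
      mem_iUnion, mem_insert_iff, mem_ofPred_eq, Finset.coe_Ico, mem_Ico, exists_prop]
    rw [mem_Iio] at hin
    by_cases hsn : s < n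
    · exact ⟨s, Or.inr ⟨hsn, hs⟩, by omega, his⟩
    · exact ⟨n, Or.inl rfl, by omega, hin⟩
  have hF : F.card ≤ (R ∩ Iio n).ncard + 1 := by
    rw [ncard_inter_Iio_eq_count, Nat.count_eq_card_filter_range]
    exact Finset.card_insert_le _ _
  calc (leftThickening R L ∩ Iio n).ncard
      ≤ (F.biUnion fun s => Finset.Ico (s - L) s).card := by
        rw [← Set.ncard_coe_finset]; exact Set.ncard_le_ncard hcover (Finset.finite_toSet _)
    _ ≤ ∑ s ∈ F, (Finset.Ico (s - L) s).card := Finset.card_biUnion_le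
    _ ≤ ∑ _s ∈ F, L := Finset.sum_le_sum fun s _ => by simp; omega
    _ ≤ L * ((R ∩ Iio n).ncard + 1) := by rw [Finset.sum_const, smul_eq_mul, mul_comm]; gcongr

theorem tendsto_partialDensity_leftThickening {R : Set ℕ}
    (hR : Tendsto (partialDensity R) atTop (𝓝 0)) (L : ℕ) :
    Tendsto (partialDensity (leftThickening R L)) atTop (𝓝 0) := by
  refine squeeze_zero (partialDensity_nonneg _) (fun n => ?_)
    (by simpa using (hR.add (tendsto_one_div_atTop_nhds_zero_nat)).const_mul (L : ℝ))
  have h := ncard_leftThickening_inter_Iio_le R L n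
  rw [partialDensity, partialDensity, ← one_div, ← add_div, mul_div_assoc']
  exact div_le_div_of_nonneg_right (by exact_mod_cast h) n.cast_nonneg

theorem ncard_range_inter_Iio_le {t : ℕ → ℕ} {I G : ℕ} (hG : 0 < G)
    (hgap : ∀ i ≥ I, t i + G ≤ t (i + 1)) (n : ℕ) :
    (range t ∩ Iio n).ncard ≤ I + n / G + 1 := by
  have hgrow : ∀ d, G * d ≤ t (I + d) := by
    intro d
    induction d with
    | zero => simp
    | succ d ih =>
      have hstep := hgap (I + d) (by omega)
      rw [← add_assoc, mul_add_one]
      omega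
  have hsub : range t ∩ Iio n ⊆ t '' Iio (I + n / G + 1) := by
    rintro _ ⟨⟨j, rfl⟩, hj⟩
    refine ⟨j, ?_, rfl⟩
    by_contra hjn
    rw [mem_Iio, not_lt] at hjn
    rw [mem_Iio] at hj
    have hlt := Nat.lt_mul_div_succ n hG
    generalize n / G = q at hlt hjn ⊢
    have hmono := Nat.mul_le_mul_left G (show q + 1 ≤ j - I by omega)
    have hj' := hgrow (j - I)
    rw [Nat.add_sub_cancel' (show I ≤ j by omega)] at hj'
    omega
  calc (range t ∩ Iio n).ncard ≤ (t '' Iio (I + n / G + 1)).ncard :=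
        Set.ncard_le_ncard hsub ((finite_Iio _).image _)
    _ ≤ (Iio (I + n / G + 1)).ncard := Set.ncard_image_le (finite_Iio _)
    _ = I + n / G + 1 := Set.ncard_Iio_nat _

theorem tendsto_partialDensity_range {t : ℕ → ℕ}
    (hd : Tendsto (fun i => t (i + 1) - t i) atTop atTop) :
    Tendsto (partialDensity (range t)) atTop (𝓝 0) := by
  refine tendsto_order.2 ⟨fun a ha => Eventually.of_forall fun n =>
    ha.trans_le (partialDensity_nonneg _ n), fun ε hε => ?_⟩
  obtain ⟨G, hG⟩ := exists_nat_gt (2 / ε)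
  have hG₀ : (0 : ℝ) < G := (by positivity : (0 : ℝ) < 2 / ε).trans hG
  have hGε : (1 : ℝ) / G < ε / 2 := by
    rw [div_lt_iff₀ hε] at hG
    rw [div_lt_iff₀ hG₀]
    linarith
  obtain ⟨I, hI⟩ := eventually_atTop.mp (hd.eventually_ge_atTop G)
  have hG₁ : 0 < G := by exact_mod_cast hG₀
  have hbound := ncard_range_inter_Iio_le (t := t) hG₁ fun i hi => by
    have hgap : G ≤ t (i + 1) - t i := hI i hi
    omega
  filter_upwards [(tendsto_const_div_atTop_nhds_zero_nat ((I + 1 : ℕ) : ℝ)).eventually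
    (gt_mem_nhds (half_pos hε)), eventually_gt_atTop 0] with n hsmall hn
  have hn : (0 : ℝ) < n := by exact_mod_cast hn
  have hcount : ((range t ∩ Iio n).ncard : ℝ) ≤ ((I + 1 : ℕ) : ℝ) + n / G := by
    have := Nat.cast_div_le (α := ℝ) (m := n) (n := G)
    have h := hbound n
    push_cast at this ⊢
    linarith [(by exact_mod_cast h : ((range t ∩ Iio n).ncard : ℝ) ≤ I + ((n / G : ℕ) : ℝ) + 1)]
  calc partialDensity (range t) n ≤ (((I + 1 : ℕ) : ℝ) + n / G) / n :=
        div_le_div_of_nonneg_right hcount hn.le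
    _ = ((I + 1 : ℕ) : ℝ) / n + 1 / G := by field_simp
    _ < ε / 2 + ε / 2 := add_lt_add hsmall hGε
    _ = ε := add_halves ε

theorem eventually_partialDensity_le_of_runs {A : Set ℕ} {t : ℕ → ℕ} {r : ℝ} (ht : StrictMono t)
    (hin : ∀ j, Ico (t (2 * j)) (t (2 * j + 1)) ⊆ A)
    (hout : ∀ j, Ico (t (2 * j + 1)) (t (2 * j + 2)) ⊆ Aᶜ)
    (hr : ∀ᶠ j in atTop, partialDensity A (t (2 * j + 1)) ≤ r) :
    ∀ᶠ n in atTop, partialDensity A n ≤ r := by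
  classical
  obtain ⟨I, hI⟩ := eventually_atTop.mp hr
  filter_upwards [eventually_ge_atTop (t (2 * I + 1))] with n hn
  have hIn : I ≤ n := ((by omega : I ≤ 2 * I + 1).trans (ht.id_le _)).trans hn
  -- the last odd-indexed endpoint not exceeding `n` is `t (2 * i + 1)`
  set i := Nat.findGreatest (fun i => t (2 * i + 1) ≤ n) n
  have hIi : I ≤ i := Nat.le_findGreatest hIn hn
  have hi : t (2 * i + 1) ≤ n := Nat.findGreatest_spec (P := fun i => t (2 * i + 1) ≤ n) hIn hn
  have hni : n < t (2 * i + 3) := by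
    by_contra! h
    have h₃ : 2 * i + 3 ≤ t (2 * i + 3) := ht.id_le _
    exact Nat.findGreatest_is_greatest (P := fun i => t (2 * i + 1) ≤ n) (Nat.lt_succ_self i)
      (by omega) h
  rcases le_total n (t (2 * i + 2)) with hn₂ | hn₂
  · exact (partialDensity_le_of_Ico_subset_compl hi
      ((Ico_subset_Ico_right hn₂).trans (hout i))).trans (hI i hIi)
  · exact (partialDensity_le_of_Ico_subset hni.le
      ((Ico_subset_Ico_left hn₂).trans (hin (i + 1)))).trans (hI (i + 1) (by omega))

def blockUnion (t : ℕ → ℕ) : Set ℕ := {n | ∃ j, t (2 * j) ≤ n ∧ n < t (2 * j + 1)}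

section BlockUnion

variable {t : ℕ → ℕ}

theorem Ico_subset_blockUnion (t : ℕ → ℕ) (j : ℕ) :
    Ico (t (2 * j)) (t (2 * j + 1)) ⊆ blockUnion t :=
  fun _ hn => ⟨j, hn⟩

theorem Ico_subset_compl_blockUnion (ht : StrictMono t) (j : ℕ) :
    Ico (t (2 * j + 1)) (t (2 * j + 2)) ⊆ (blockUnion t)ᶜ := by
  rintro n ⟨h₁, h₂⟩ ⟨j', h₃, h₄⟩
  have := ht.lt_iff_lt.mp (h₃.trans_lt h₂)
  have := ht.lt_iff_lt.mp (h₁.trans_lt h₄)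
  omega

theorem mem_blockUnion_iff_succ_or_succ_mem_range (t : ℕ → ℕ) (n : ℕ) :
    (n ∈ blockUnion t ↔ n + 1 ∈ blockUnion t) ∨ n + 1 ∈ range t := by
  refine or_iff_not_imp_right.mpr fun hrange => ⟨?_, ?_⟩
  · rintro ⟨j, h₁, h₂⟩
    exact ⟨j, by omega, lt_of_le_of_ne h₂ fun h => hrange ⟨_, h.symm⟩⟩
  · rintro ⟨j, h₁, h₂⟩
    exact ⟨j, Nat.le_of_lt_succ (lt_of_le_of_ne h₁ fun h => hrange ⟨_, h⟩), by omega⟩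

theorem infinite_compl_blockUnion (ht : StrictMono t) : (blockUnion t)ᶜ.Infinite :=
  Set.infinite_of_forall_exists_gt fun j =>
    ⟨t (2 * j + 1), Ico_subset_compl_blockUnion ht j ⟨le_rfl, ht (by omega)⟩,
      (by omega : j < 2 * j + 1).trans_le (ht.id_le _)⟩

theorem limsup_partialDensity_blockUnion {q : ℝ} (ht : StrictMono t)
    (hq : Tendsto (fun j => partialDensity (blockUnion t) (t (2 * j + 1))) atTop (𝓝 q)) :
    limsup (partialDensity (blockUnion t)) atTop = q := by
  have hodd : Tendsto (fun j => t (2 * j + 1)) atTop atTop :=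
    ht.tendsto_atTop.comp (tendsto_atTop_mono (fun j => by simp only [id]; omega) tendsto_id)
  refine limsup_eq_of_mapClusterPt (hq.mapClusterPt.of_comp hodd) fun r hr => ?_
  exact eventually_partialDensity_le_of_runs ht (Ico_subset_blockUnion t)
    (Ico_subset_compl_blockUnion ht) (hq.eventually (eventually_le_nhds hr))

theorem liminf_partialDensity_blockUnion {p : ℝ} (ht : StrictMono t)
    (hp : Tendsto (fun j => partialDensity (blockUnion t) (t (2 * j + 2))) atTop (𝓝 p)) :
    liminf (partialDensity (blockUnion t)) atTop = p := by
  have heven : Tendsto (fun j => t (2 * j + 2)) atTop atTop :=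
    ht.tendsto_atTop.comp (tendsto_atTop_mono (fun j => by simp only [id]; omega) tendsto_id)
  refine liminf_eq_of_mapClusterPt (hp.mapClusterPt.of_comp heven) fun r hr => ?_
  -- the complement is again a union of blocks, delimited by the shifted endpoints `t (j + 1)`
  have hcompl : ∀ᶠ n in atTop, partialDensity (blockUnion t)ᶜ n ≤ 1 - r := by
    refine eventually_partialDensity_le_of_runs (t := fun j => t (j + 1))
      (ht.comp (strictMono_id.add_const 1)) (Ico_subset_compl_blockUnion ht)
      (fun j => by rw [compl_compl]; convert Ico_subset_blockUnion t (j + 1) using 3 <;> ring) ?_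
    filter_upwards [hp.eventually (eventually_ge_nhds hr)] with j hj
    rw [partialDensity_compl _ ((by omega : 0 < 2 * j + 2).trans_le (ht.id_le _))]
    linarith
  filter_upwards [hcompl, eventually_gt_atTop 0] with n hn hn₀
  rw [partialDensity_compl _ hn₀] at hn
  linarith

theorem densitySpectrum_blockUnion {p q : ℝ} (ht : StrictMono t)
    (hq : Tendsto (fun j => partialDensity (blockUnion t) (t (2 * j + 1))) atTop (𝓝 q))
    (hp : Tendsto (fun j => partialDensity (blockUnion t) (t (2 * j + 2))) atTop (𝓝 p)) :
    densitySpectrum (blockUnion t) = Icc p q := by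
  rw [densitySpectrum_eq_Icc, liminf_partialDensity_blockUnion ht hp,
    limsup_partialDensity_blockUnion ht hq]

end BlockUnion

theorem shift_iterate_apply {K : ℕ} (i : ℕ) (z : SymbSp K) (j : ℕ) :
    (shift K)^[i] z j = z (j + i) := by
  induction i generalizing z with
  | zero => rfl
  | succ i ih =>
    rw [Function.iterate_succ_apply, ih]
    rfl

theorem SymbSp.exists_dist_lt_iff {K : ℕ} (hK : 2 ≤ K) {ε : ℝ} (hε : 0 < ε) :
    ∃ m : ℕ, (K : ℝ)⁻¹ ^ m < ε ∧ ∀ u v : SymbSp K, dist u v < ε ↔ ∀ j < m, u j = v j := by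
  classical
  have hex : ∃ m : ℕ, (K : ℝ)⁻¹ ^ m < ε :=
    exists_pow_lt_of_lt_one hε (inv_lt_one_of_one_lt₀ (by exact_mod_cast hK))
  refine ⟨Nat.find hex, Nat.find_spec hex, fun u v => ⟨fun h j hj => ?_,
    fun h => (SymbSp.sdist_le_of_agree h).trans_lt (Nat.find_spec hex)⟩⟩
  by_contra hne
  have huv : u ≠ v := fun h => hne (congrFun h j)
  have hfirst : Nat.find (SymbSp.exists_ne huv) ≤ j := Nat.find_min' _ hne
  rw [show dist u v = SymbSp.sdist u v from rfl, SymbSp.sdist_eq huv] at h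
  exact Nat.find_min hex (hfirst.trans_lt hj) h

theorem SymbSp.eventually_exists_ne_of_lt_liminf {K k : ℕ} {a b : SymbSp K}
    (hab : (K : ℝ)⁻¹ ^ k < liminf (fun i => dist ((shift K)^[i] a) ((shift K)^[i] b)) atTop) :
    ∀ᶠ i in atTop, ∃ j < k, a (i + j) ≠ b (i + j) := by
  filter_upwards [eventually_lt_of_lt_liminf hab (isBoundedUnder_of ⟨0, fun _ => dist_nonneg⟩)]
    with i hi
  by_contra! hagree
  refine hi.not_ge (SymbSp.sdist_le_of_agree fun j hj => ?_)
  rw [shift_iterate_apply, shift_iterate_apply, add_comm]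
  exact hagree j hj

theorem lowF_eq_liminf_partialDensity {X : Type*} [MetricSpace X] (f : X → X) (x y : X) (ε : ℝ) :
    lowF f x y ε = liminf (partialDensity {i | dist (f^[i] x) (f^[i] y) < ε}) atTop := by
  simp only [lowF, card_filter_range_eq_ncard]
  rfl

theorem uppF_eq_limsup_partialDensity {X : Type*} [MetricSpace X] (f : X → X) (x y : X) (ε : ℝ) :
    uppF f x y ε = limsup (partialDensity {i | dist (f^[i] x) (f^[i] y) < ε}) atTop := by
  simp only [uppF, card_filter_range_eq_ncard]
  rfl

section Phi

variable {K : ℕ} {N : Set ℕ} {a b c : SymbSp K}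

theorem Phi_apply_of_mem {i : ℕ} (hi : i ∈ N) : Phi N c a i = c (gammaCount N i) := by
  simp [Phi, hi]

theorem Phi_apply_of_notMem {i : ℕ} (hi : i ∉ N) : Phi N c a i = a (gammaCount Nᶜ i) := by
  simp [Phi, hi]

theorem exists_Phi_ne_of_Ico_subset_compl {i k : ℕ} (hgap : Ico i (i + k) ⊆ Nᶜ)
    (hab : ∃ j < k, a (gammaCount Nᶜ i + j) ≠ b (gammaCount Nᶜ i + j)) :
    ∃ j < k, Phi N c a (i + j) ≠ Phi N c b (i + j) := by
  obtain ⟨j, hj, hne⟩ := hab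
  have hmem : i + j ∉ N := hgap ⟨le_self_add, by omega⟩
  refine ⟨j, hj, ?_⟩
  rwa [Phi_apply_of_notMem hmem, Phi_apply_of_notMem hmem, gammaCount,
    ncard_inter_Iio_add_of_Ico_subset ((Ico_subset_Ico_right (by omega)).trans hgap)]

end Phi

theorem symmDiff_subset_leftThickening {α : Type*} {N R S : Set ℕ} {x y : ℕ → α} {k m T : ℕ}
    (hR : ∀ n, (n ∈ N ↔ n + 1 ∈ N) ∨ n + 1 ∈ R)
    (hS : ∀ i, i ∈ S ↔ ∀ j < m, x (i + j) = y (i + j)) (hN : ∀ i ∈ N, x i = y i) (hkm : k ≤ m)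
    (hsep : ∀ i ≥ T, Ico i (i + k) ⊆ Nᶜ → ∃ j < k, x (i + j) ≠ y (i + j)) :
    symmDiff S N ⊆ leftThickening R m ∪ Iio T := by
  rintro i (⟨hiS, hiN⟩ | ⟨hiN, hiS⟩)
  · rcases lt_or_ge i T with hiT | hiT
    · exact Or.inr hiT
    obtain ⟨l, ⟨hil, hlk⟩, hlN⟩ := not_subset.mp fun hgap => by
      obtain ⟨j, hj, hne⟩ := hsep i hiT hgap
      exact hne ((hS i).mp hiS j (by omega))
    obtain ⟨j, rfl⟩ := Nat.exists_eq_add_of_le hil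
    exact Or.inl (leftThickening_mono R (by omega)
      (mem_leftThickening_of_mem_iff_ne hR fun h => hiN (h.mpr (not_not.mp hlN))))
  · obtain ⟨j, hj, hne⟩ : ∃ j < m, x (i + j) ≠ y (i + j) := by simpa [hS] using hiS
    exact Or.inl (leftThickening_mono R hj.le
      (mem_leftThickening_of_mem_iff_ne hR fun h => hne (hN _ (h.mp hiN))))

theorem densitySpectrum_setOf_dist_iterate_Phi_lt {K k : ℕ} (hK : 2 ≤ K) {a b c : SymbSp K}
    {t : ℕ → ℕ} (ht : StrictMono t) (hd : Tendsto (fun i => t (i + 1) - t i) atTop atTop)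
    (hab : (K : ℝ)⁻¹ ^ k < liminf (fun i => dist ((shift K)^[i] a) ((shift K)^[i] b)) atTop)
    {ε : ℝ} (hε : 0 < ε) (hεk : ∀ j < k, ε ≤ (K : ℝ)⁻¹ ^ j) :
    densitySpectrum {i | dist ((shift K)^[i] (Phi (blockUnion t) c a))
      ((shift K)^[i] (Phi (blockUnion t) c b)) < ε} = densitySpectrum (blockUnion t) := by
  obtain ⟨m, hm, hdist⟩ := SymbSp.exists_dist_lt_iff hK hε
  have hkm : k ≤ m := by
    by_contra! h
    exact (hεk m h).not_gt hm
  obtain ⟨T, hT⟩ := eventually_atTop.mp ((tendsto_gammaCount_atTop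
    (infinite_compl_blockUnion ht)).eventually (SymbSp.eventually_exists_ne_of_lt_liminf hab))
  refine densitySpectrum_eq_of_tendsto_sub (tendsto_partialDensity_sub_of_symmDiff_subset
    (tendsto_partialDensity_leftThickening (tendsto_partialDensity_range hd) m)
    (symmDiff_subset_leftThickening (mem_blockUnion_iff_succ_or_succ_mem_range t) (fun i => ?_)
      (fun i hi => ?_) hkm fun i hi hgap =>
        exists_Phi_ne_of_Ico_subset_compl (c := c) hgap (hT i hi)))
  · simp only [mem_ofPred_eq, hdist, shift_iterate_apply, add_comm]
  · rw [Phi_apply_of_mem hi, Phi_apply_of_mem hi]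

theorem statement_17_general (K : ℕ) (hK : 2 ≤ K) (k : ℕ)
    (a b c : SymbSp K)
    (hab : (K : ℝ) ^ (1 - (k : ℤ)) ≤
      Filter.liminf (fun i : ℕ => dist ((shift K)^[i] a) ((shift K)^[i] b)) Filter.atTop)
    (p q : ℝ)
    (N : Set ℕ) (t : ℕ → ℕ) (ht : StrictMono t)
    (hrep : N = {n | ∃ j : ℕ, t (2 * j) ≤ n ∧ n < t (2 * j + 1)})
    (hd : Filter.Tendsto (fun i : ℕ => t (i + 1) - t i) Filter.atTop Filter.atTop)
    (hto_q : Filter.Tendsto (fun i : ℕ =>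
        ((N ∩ Set.Iio (t (2 * i + 1))).ncard : ℝ) / t (2 * i + 1)) Filter.atTop (nhds q))
    (hto_p : Filter.Tendsto (fun i : ℕ =>
        ((N ∩ Set.Iio (t (2 * i + 2))).ncard : ℝ) / t (2 * i + 2)) Filter.atTop (nhds p)) :
    (∀ ε : ℝ, 0 < ε → ε ≤ (K : ℝ) ^ (1 - (k : ℤ)) →
      {r : ℝ | MapClusterPt r Filter.atTop (fun n : ℕ =>
        (({i : ℕ | dist ((shift K)^[i] (Phi N c a)) ((shift K)^[i] (Phi N c b)) < ε} ∩
            Set.Iio n).ncard : ℝ) / n)} = Set.Icc p q) ∧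
    (Phi N c a, Phi N c b) ∈ Dset (shift K) p q := by
  obtain rfl : N = blockUnion t := hrep
  have hK₁ : (1 : ℝ) < K := by exact_mod_cast hK
  have hpow (n : ℕ) : (K : ℝ)⁻¹ ^ n = (K : ℝ) ^ (-(n : ℤ)) := by
    rw [zpow_neg, zpow_natCast, inv_pow]
  have hdistal := ((hpow k).trans_lt (zpow_lt_zpow_right₀ hK₁ (by omega))).trans_le hab
  have hspec (ε : ℝ) (hε : 0 < ε) (hεk : ε ≤ (K : ℝ) ^ (1 - (k : ℤ))) :=
    densitySpectrum_setOf_dist_iterate_Phi_lt hK (c := c) ht hd hdistal hε fun j hj =>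
      hεk.trans ((zpow_le_zpow_right₀ hK₁.le (by omega)).trans_eq (hpow j).symm)
  refine ⟨fun ε hε hεk => (hspec ε hε hεk).trans (densitySpectrum_blockUnion ht hto_q hto_p),
    _, zpow_pos (zero_lt_one.trans hK₁) (1 - (k : ℤ)), fun ε hε hεk => ⟨?_, ?_⟩⟩
  · rw [lowF_eq_liminf_partialDensity, liminf_partialDensity_eq_of_densitySpectrum_eq
      (hspec ε hε hεk), liminf_partialDensity_blockUnion ht hto_p]
  · rw [uppF_eq_limsup_partialDensity, limsup_partialDensity_eq_of_densitySpectrum_eq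
      (hspec ε hε hεk), limsup_partialDensity_blockUnion ht hto_q]

/-- Let `K ≥ 2`, `k ≥ 1`, and `a, b, c ∈ Σ_K` with
`liminf_i ρ(σ_K^i a, σ_K^i b) ≥ K^{−k+1}` (i.e. `(a,b)` is `K^{−k+1}`-distal).
Let `[p,q] ⊆ [0,1]` and `N ∈ 𝓜([p,q])` (with maximal-interval endpoints `t`,
`d_{N,i} → ∞`, `e_{N,2i}/t_{2i+1} → q`, `e_{N,2i+1}/t_{2i+2} → p`).
Set `x = Φ_{N,c}(a)`, `y = Φ_{N,c}(b)`. Then for every `ε ∈ (0, K^{−k+1}]` the density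
spectrum of `{i : ρ(σ_K^i x, σ_K^i y) < ε}` equals `[p,q]`; in particular
`(x,y) ∈ D_{σ_K}([p,q])`. -/
theorem statement_17 (K : ℕ) (hK : 2 ≤ K) (k : ℕ) (hk : 1 ≤ k)
    (a b c : SymbSp K)
    (hab : (K : ℝ) ^ (1 - (k : ℤ)) ≤
      Filter.liminf (fun i : ℕ => dist ((shift K)^[i] a) ((shift K)^[i] b)) Filter.atTop)
    (p q : ℝ) (hp : 0 ≤ p) (hpq : p ≤ q) (hq : q ≤ 1)
    (N : Set ℕ) (t : ℕ → ℕ) (ht : StrictMono t)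
    (hrep : N = {n | ∃ j : ℕ, t (2 * j) ≤ n ∧ n < t (2 * j + 1)})
    (hd : Filter.Tendsto (fun i : ℕ => t (i + 1) - t i) Filter.atTop Filter.atTop)
    (hto_q : Filter.Tendsto (fun i : ℕ =>
        ((N ∩ Set.Iio (t (2 * i + 1))).ncard : ℝ) / t (2 * i + 1)) Filter.atTop (nhds q))
    (hto_p : Filter.Tendsto (fun i : ℕ =>
        ((N ∩ Set.Iio (t (2 * i + 2))).ncard : ℝ) / t (2 * i + 2)) Filter.atTop (nhds p)) :
    (∀ ε : ℝ, 0 < ε → ε ≤ (K : ℝ) ^ (1 - (k : ℤ)) →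
      {r : ℝ | MapClusterPt r Filter.atTop (fun n : ℕ =>
        (({i : ℕ | dist ((shift K)^[i] (Phi N c a)) ((shift K)^[i] (Phi N c b)) < ε} ∩
            Set.Iio n).ncard : ℝ) / n)} = Set.Icc p q) ∧
    (Phi N c a, Phi N c b) ∈ Dset (shift K) p q :=
  statement_17_general K hK k a b c hab p q N t ht hrep hd hto_q hto_p

end
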